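/- arXiv:1905.05917 — 2 statements merged into one kernel-verified Lean document; each statement's English description precedes it below -/
import Mathlib

section
/- Under the same setup as the Maler meta algorithm (T ≥ 1, G, D > 0, N = ⌈(log₂ T)/2⌉, grid η_i = 2^{−i}/(5DG), η^c = 1/(2GD√T), priors π^c = 1/3 and π_i^s = π_i^ℓ = C/(3(i+1)(i+2)) with C = 1 + 1/(N+1); expert points x_t^c, x_t^{i,s}, x_t^{i,ℓ} in a convex set 𝒟 ⊆ ℝ^d of diameter at most D; gradients g_t with ‖g_t‖ ≤ G; and x_t the tilted exponentially weighted average of the expert points with weights proportional to the prior times the exponentiated negative cumulative surrogate loss of each expert, tilted by its learning rate), it holds that Σ_{t=1}^T c_t(x_t^c) ≥ −ln 3; equivalently, Σ_{t=1}^T c_t(x_t) − Σ_{t=1}^T c_t(x_t^c) ≤ 1/4 + ln 3. -/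
open Real Finset
open scoped InnerProductSpace

/-!
The potential `∑ₖ πₖ Wₖ(t)` of the expert weights never increases. For an expert with rate `η`
and residual `r = ⟪x_t - x_tᵏ, g_t⟫`, the surrogate loss dominates `-η r + (η r)²`, and
`|η r| ≤ 1/2` because `x_t`, a convex combination of the expert points, lies in `𝒟`; since
`exp (a - a²) ≤ 1 + a` for `a ≥ -1/2`, the weight is multiplied by at most `1 + η r`. Summed
against `πₖ Wₖ(t)`, the linear terms `∑ₖ πₖ ηₖ Wₖ(t) rₖ` vanish exactly because `x_t` is the
`η`-tilted average. Hence `π^c W^c(T + 1) ≤ ∑ₖ πₖ = 1`, which is `∑ c_t(x_tᶜ) ≥ -log 3`,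
while `c_t(x_t) = (η^c G D)²` sums to `1/4`.
-/

theorem Real.exp_sub_sq_le_one_add {a : ℝ} (ha : -(1 / 2) ≤ a) : exp (a - a ^ 2) ≤ 1 + a := by
  -- `q` is a Taylor lower bound of `exp (a ^ 2 - a)`: first order for `a ≥ 0`, second for `a < 0`
  obtain ⟨q, hq0, hq, hqa⟩ : ∃ q, 0 < q ∧ q ≤ exp (a ^ 2 - a) ∧ 1 ≤ (1 + a) * q := by
    rcases le_or_gt 0 a with h | h
    · exact ⟨a ^ 2 - a + 1, by nlinarith, add_one_le_exp _, by nlinarith [pow_nonneg h 3]⟩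
    · refine ⟨1 + (a ^ 2 - a) + (a ^ 2 - a) ^ 2 / 2, by nlinarith,
        quadratic_le_exp_of_nonneg (by nlinarith), ?_⟩
      nlinarith [mul_pos (neg_pos.2 h) (neg_pos.2 h),
        mul_nonneg (neg_pos.2 h).le (sq_nonneg (a + 1 / 2))]
  calc exp (a - a ^ 2) = (exp (a ^ 2 - a))⁻¹ := by rw [← exp_neg, neg_sub]
    _ ≤ q⁻¹ := inv_anti₀ hq0 hq
    _ ≤ 1 + a := (inv_le_iff_one_le_mul₀ hq0).2 hqa

theorem sum_range_inv_succ_mul_succ (n : ℕ) :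
    ∑ i ∈ range n, 1 / (((i : ℝ) + 1) * (i + 2)) = n / (n + 1) := by
  induction n with
  | zero => simp
  | succ n ih =>
    rw [sum_range_succ, ih]
    push_cast
    field_simp
    ring

theorem Finset.sum_mul_inner_centerMass_sub {ι E : Type*} [NormedAddCommGroup E]
    [InnerProductSpace ℝ E] (t : Finset ι) {w : ι → ℝ} (hw : ∑ i ∈ t, w i ≠ 0) (z : ι → E)
    (g : E) : ∑ i ∈ t, w i * ⟪t.centerMass w z - z i, g⟫_ℝ = 0 := by
  have : ∑ i ∈ t, w i • (t.centerMass w z - z i) = 0 := by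
    simp only [smul_sub, sum_sub_distrib, ← sum_smul, centerMass, smul_inv_smul₀ hw, sub_self]
  simp [← real_inner_smul_left, ← sum_inner, this]

theorem weight_succ_eq_mul_exp {W F : ℕ → ℝ}
    (hW : ∀ t, W t = exp (-∑ τ ∈ Icc 1 (t - 1), F τ)) (n : ℕ) :
    W (n + 2) = W (n + 1) * exp (-F (n + 1)) := by
  rw [hW, hW, ← exp_add, show n + 2 - 1 = n + 1 by omega, Nat.add_sub_cancel,
    sum_Icc_succ_top (by omega)]
  ring_nf

section Potential

variable {ι : Type*} {s : Finset ι} {p η : ι → ℝ} {W F r : ι → ℕ → ℝ}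

theorem sum_prior_mul_weight_succ_le (hp : ∀ k ∈ s, 0 ≤ p k)
    (hW : ∀ k ∈ s, ∀ t, W k t = exp (-∑ τ ∈ Icc 1 (t - 1), F k τ)) (n : ℕ)
    (hbal : ∑ k ∈ s, p k * η k * W k (n + 1) * r k (n + 1) = 0)
    (hF : ∀ k ∈ s, exp (-F k (n + 1)) ≤ 1 + η k * r k (n + 1)) :
    ∑ k ∈ s, p k * W k (n + 2) ≤ ∑ k ∈ s, p k * W k (n + 1) :=
  calc ∑ k ∈ s, p k * W k (n + 2)
      ≤ ∑ k ∈ s, p k * W k (n + 1) * (1 + η k * r k (n + 1)) := by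
        refine sum_le_sum fun k hk => ?_
        rw [weight_succ_eq_mul_exp (hW k hk), ← mul_assoc]
        have : 0 ≤ W k (n + 1) := hW k hk _ ▸ (exp_pos _).le
        gcongr
        exacts [mul_nonneg (hp k hk) this, hF k hk]
    _ = ∑ k ∈ s, p k * W k (n + 1) + ∑ k ∈ s, p k * η k * W k (n + 1) * r k (n + 1) := by
        rw [← sum_add_distrib]; congr! 1 with k; ring
    _ = ∑ k ∈ s, p k * W k (n + 1) := by rw [hbal, add_zero]

theorem sum_prior_mul_weight_le_sum_prior {T : ℕ} (hp : ∀ k ∈ s, 0 ≤ p k)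
    (hW : ∀ k ∈ s, ∀ t, W k t = exp (-∑ τ ∈ Icc 1 (t - 1), F k τ))
    (hbal : ∀ t ∈ Icc 1 T, ∑ k ∈ s, p k * η k * W k t * r k t = 0)
    (hF : ∀ t ∈ Icc 1 T, ∀ k ∈ s, exp (-F k t) ≤ 1 + η k * r k t) :
    ∑ k ∈ s, p k * W k (T + 1) ≤ ∑ k ∈ s, p k := by
  induction T with
  | zero => exact (sum_congr rfl fun k hk => by simp [hW k hk]).le
  | succ n ih =>
    have hIcc : Icc 1 n ⊆ Icc 1 (n + 1) := Icc_subset_Icc_right n.le_succ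
    have hn : n + 1 ∈ Icc 1 (n + 1) := by simp
    exact (sum_prior_mul_weight_succ_le hp hW n (hbal _ hn) (hF _ hn)).trans
      (ih (fun t ht => hbal t (hIcc ht)) fun t ht => hF t (hIcc ht))

end Potential

theorem exp_neg_le_one_add_of_abs_le {η r M q : ℝ} (hη : 0 ≤ η) (hr : |r| ≤ M)
    (hηM : η * M ≤ 1 / 2) (hq : r ^ 2 ≤ q) : exp (-(-η * r + η ^ 2 * q)) ≤ 1 + η * r := by
  have hhalf : -(1 / 2) ≤ η * r := by
    have := mul_le_mul_of_nonneg_left (neg_le_of_abs_le hr) hη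
    linarith
  calc exp (-(-η * r + η ^ 2 * q)) ≤ exp (η * r - (η * r) ^ 2) := by
        gcongr; nlinarith [mul_le_mul_of_nonneg_left hq (sq_nonneg η)]
    _ ≤ 1 + η * r := exp_sub_sq_le_one_add hhalf

section Geometry

variable {E : Type*} [NormedAddCommGroup E] [InnerProductSpace ℝ E]

theorem abs_inner_sub_le_of_mem {𝒟 : Set E} {D G : ℝ} (hdiam : ∀ a ∈ 𝒟, ∀ b ∈ 𝒟, ‖a - b‖ ≤ D)
    {a b g : E} (ha : a ∈ 𝒟) (hb : b ∈ 𝒟) (hg : ‖g‖ ≤ G) : |⟪a - b, g⟫_ℝ| ≤ D * G :=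
  (abs_real_inner_le_norm _ _).trans <|
    mul_le_mul (hdiam a ha b hb) hg (norm_nonneg _) ((norm_nonneg _).trans (hdiam a ha b hb))

theorem sq_inner_le_sq_mul_sq_norm {v g : E} {G : ℝ} (hg : ‖g‖ ≤ G) :
    ⟪v, g⟫_ℝ ^ 2 ≤ G ^ 2 * ‖v‖ ^ 2 := by
  rw [← sq_abs, ← mul_pow]
  gcongr
  calc |⟪v, g⟫_ℝ| ≤ ‖v‖ * ‖g‖ := abs_real_inner_le_norm _ _
    _ ≤ G * ‖v‖ := by rw [mul_comm]; gcongr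

end Geometry

theorem convex_rate_pos_and_mul_le_half {G D : ℝ} (hG : 0 < G) (hD : 0 < D) {T : ℕ}
    (hT : 1 ≤ T) : 0 < 1 / (2 * G * D * √T) ∧ 1 / (2 * G * D * √T) * (D * G) ≤ 1 / 2 := by
  have : 1 ≤ √(T : ℝ) := one_le_sqrt.2 (by exact_mod_cast hT)
  refine ⟨by positivity, ?_⟩
  rw [div_mul_eq_mul_div, div_le_div_iff₀ (by positivity) (by norm_num)]
  nlinarith [mul_pos hD hG]

theorem grid_rate_pos_and_mul_le_half {G D : ℝ} (hG : 0 < G) (hD : 0 < D) (i : ℕ) :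
    0 < (2 : ℝ) ^ (-(i : ℤ)) / (5 * D * G) ∧
      (2 : ℝ) ^ (-(i : ℤ)) / (5 * D * G) * (D * G) ≤ 1 / 2 := by
  have : (2 : ℝ) ^ (-(i : ℤ)) ≤ 1 := zpow_le_one_of_nonpos₀ (by norm_num) (by omega)
  refine ⟨by positivity, ?_⟩
  rw [div_mul_eq_mul_div, div_le_div_iff₀ (by positivity) (by norm_num)]
  nlinarith [mul_pos hD hG]

theorem natCast_mul_sq_convex_rate_mul {G D : ℝ} (hG : 0 < G) (hD : 0 < D) {T : ℕ}
    (hT : 1 ≤ T) : (T : ℝ) * (1 / (2 * G * D * √T) * G * D) ^ 2 = 1 / 4 := by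
  have : 0 < √(T : ℝ) := sqrt_pos.2 (by exact_mod_cast hT)
  field_simp
  rw [sq_sqrt (Nat.cast_nonneg T)]
  ring

def malerExperts (N : ℕ) : Finset (Option (ℕ × Bool)) :=
  insertNone (range (N + 1) ×ˢ univ)

/-- `none` is the convex expert; `some (i, true)` and `some (i, false)` are the strongly convex
and the exp-concave expert with learning rate `η i`. -/
def malerCases {α : Type*} (a : α) (b c : ℕ → α) : Option (ℕ × Bool) → α
  | none => a
  | some (i, true) => b i
  | some (i, false) => c i

theorem none_mem_malerExperts (N : ℕ) : none ∈ malerExperts N := by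
  simp [malerExperts]

theorem sum_malerExperts {M : Type*} [AddCommMonoid M] (N : ℕ) (f : Option (ℕ × Bool) → M) :
    ∑ k ∈ malerExperts N, f k =
      f none + ∑ i ∈ range (N + 1), (f (some (i, true)) + f (some (i, false))) := by
  simp [malerExperts, sum_product]

theorem forall_mem_malerExperts {N : ℕ} {P : Option (ℕ × Bool) → Prop} :
    (∀ k ∈ malerExperts N, P k) ↔
      P none ∧ ∀ i ≤ N, P (some (i, true)) ∧ P (some (i, false)) := by
  rw [malerExperts, forall_mem_insertNone]
  simp [Bool.forall_bool, and_comm, forall_and]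

theorem sum_malerExperts_prior {N : ℕ} {C pc : ℝ} {ps pl : ℕ → ℝ} (hC : C = 1 + 1 / (N + 1))
    (hpc : pc = 1 / 3) (hps : ∀ i, ps i = C / (3 * (i + 1) * (i + 2)))
    (hpl : ∀ i, pl i = C / (3 * (i + 1) * (i + 2))) :
    ∑ k ∈ malerExperts N, malerCases pc ps pl k = 1 := by
  have hterm : ∀ i : ℕ, ps i + pl i = 2 * C / 3 * (1 / ((i + 1) * (i + 2))) := fun i => by
    rw [hps, hpl]; field_simp; ring
  rw [sum_malerExperts]
  simp only [malerCases]
  rw [sum_congr rfl fun i _ => hterm i, ← mul_sum, sum_range_inv_succ_mul_succ, hC, hpc]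
  push_cast
  field_simp
  ring

theorem centerMass_malerExperts {E : Type*} [AddCommGroup E] [Module ℝ E] (N t : ℕ)
    (pc ηc : ℝ) (ps pl η : ℕ → ℝ) (Wc : ℕ → ℝ) (Ws Wl : ℕ → ℕ → ℝ) (xc : ℕ → E)
    (xs xl : ℕ → ℕ → E) :
    (malerExperts N).centerMass
        (fun k => malerCases pc ps pl k * malerCases ηc η η k * malerCases Wc Ws Wl k t)
        (fun k => malerCases xc xs xl k t) =
      (pc * ηc * Wc t + ∑ i ∈ range (N + 1), η i * (ps i * Ws i t + pl i * Wl i t))⁻¹ •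
        ((pc * ηc * Wc t) • xc t + ∑ i ∈ range (N + 1),
          ((ps i * η i * Ws i t) • xs i t + (pl i * η i * Wl i t) • xl i t)) := by
  simp only [centerMass, sum_malerExperts, malerCases]
  congr 3
  exact sum_congr rfl fun i _ => by ring

theorem sum_prior_mul_weight_le_sum_prior_of_centerMass {ι E : Type*} [NormedAddCommGroup E]
    [InnerProductSpace ℝ E] {s : Finset ι} {𝒟 : Set E} {D G : ℝ} {T : ℕ}
    {p η : ι → ℝ} {W F : ι → ℕ → ℝ} {y : ι → ℕ → E} {x g : ℕ → E}
    (hconv : Convex ℝ 𝒟) (hdiam : ∀ a ∈ 𝒟, ∀ b ∈ 𝒟, ‖a - b‖ ≤ D)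
    (hs : s.Nonempty) (hp : ∀ k ∈ s, 0 < p k) (hη : ∀ k ∈ s, 0 < η k)
    (hW : ∀ k ∈ s, ∀ t, W k t = exp (-∑ τ ∈ Icc 1 (t - 1), F k τ))
    (hy : ∀ k ∈ s, ∀ t ∈ Icc 1 T, y k t ∈ 𝒟) (hg : ∀ t ∈ Icc 1 T, ‖g t‖ ≤ G)
    (hx : ∀ t ∈ Icc 1 T, x t = s.centerMass (fun k => p k * η k * W k t) (fun k => y k t))
    (hF : ∀ t ∈ Icc 1 T, ∀ k ∈ s, |⟪x t - y k t, g t⟫_ℝ| ≤ D * G →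
      exp (-F k t) ≤ 1 + η k * ⟪x t - y k t, g t⟫_ℝ) :
    ∑ k ∈ s, p k * W k (T + 1) ≤ ∑ k ∈ s, p k := by
  have hw : ∀ t, ∀ k ∈ s, 0 < p k * η k * W k t := fun t k hk => by
    have := hp k hk; have := hη k hk; rw [hW k hk]; positivity
  have hwsum : ∀ t, 0 < ∑ k ∈ s, p k * η k * W k t := fun t => sum_pos (hw t) hs
  have hxD : ∀ t ∈ Icc 1 T, x t ∈ 𝒟 := fun t ht => hx t ht ▸
    hconv.centerMass_mem (fun k hk => (hw t k hk).le) (hwsum t) fun k hk => hy k hk t ht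
  refine sum_prior_mul_weight_le_sum_prior (fun k hk => (hp k hk).le) hW
    (fun t ht => ?_) fun t ht k hk => hF t ht k hk ?_
  · rw [hx t ht]
    exact sum_mul_inner_centerMass_sub s (hwsum t).ne' _ _
  · exact abs_inner_sub_le_of_mem hdiam (hxD t ht) (hy k hk t ht) (hg t ht)

theorem maler_meta_regret_convex_general
    (d T : ℕ) (hT : 1 ≤ T)
    (G D : ℝ) (hG : 0 < G) (hD : 0 < D)
    (N : ℕ)
    (η : ℕ → ℝ) (hη : ∀ i, η i = (2 : ℝ)^(-(i : ℤ)) / (5 * D * G))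
    (ηc : ℝ) (hηc : ηc = 1 / (2 * G * D * Real.sqrt T))
    (C : ℝ) (hC : C = 1 + 1 / (N + 1))
    (πc : ℝ) (hπc : πc = 1 / 3)
    (πs πl : ℕ → ℝ)
    (hπs : ∀ i, πs i = C / (3 * (i + 1) * (i + 2)))
    (hπl : ∀ i, πl i = C / (3 * (i + 1) * (i + 2)))
    (𝒟 : Set (EuclideanSpace ℝ (Fin d))) (hconv : Convex ℝ 𝒟)
    (hdiam : ∀ a ∈ 𝒟, ∀ b ∈ 𝒟, ‖a - b‖ ≤ D)
    (xc : ℕ → EuclideanSpace ℝ (Fin d))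
    (xs xl : ℕ → ℕ → EuclideanSpace ℝ (Fin d))
    (g : ℕ → EuclideanSpace ℝ (Fin d))
    (hxc : ∀ t ∈ Finset.Icc 1 T, xc t ∈ 𝒟)
    (hxs : ∀ i ≤ N, ∀ t ∈ Finset.Icc 1 T, xs i t ∈ 𝒟)
    (hxl : ∀ i ≤ N, ∀ t ∈ Finset.Icc 1 T, xl i t ∈ 𝒟)
    (hg : ∀ t ∈ Finset.Icc 1 T, ‖g t‖ ≤ G)
    (x : ℕ → EuclideanSpace ℝ (Fin d))
    (c : ℕ → EuclideanSpace ℝ (Fin d) → ℝ)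
    (hc : ∀ t y, c t y = -ηc * (inner ℝ (x t - y) (g t) : ℝ) + (ηc * G * D)^2)
    (s l : ℕ → ℕ → EuclideanSpace ℝ (Fin d) → ℝ)
    (hs : ∀ i t y, s i t y =
      -(η i) * (inner ℝ (x t - y) (g t) : ℝ) + (η i)^2 * G^2 * ‖x t - y‖^2)
    (hl : ∀ i t y, l i t y =
      -(η i) * (inner ℝ (x t - y) (g t) : ℝ) + (η i)^2 * (inner ℝ (x t - y) (g t) : ℝ)^2)
    (Wc : ℕ → ℝ)
    (hWc : ∀ t, Wc t = Real.exp (-(∑ τ ∈ Finset.Icc 1 (t - 1), c τ (xc τ))))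
    (Ws Wl : ℕ → ℕ → ℝ)
    (hWs : ∀ i t, Ws i t = Real.exp (-(∑ τ ∈ Finset.Icc 1 (t - 1), s i τ (xs i τ))))
    (hWl : ∀ i t, Wl i t = Real.exp (-(∑ τ ∈ Finset.Icc 1 (t - 1), l i τ (xl i τ))))
    (hx : ∀ t ∈ Finset.Icc 1 T, x t =
      (πc * ηc * Wc t +
        ∑ i ∈ Finset.range (N + 1), η i * (πs i * Ws i t + πl i * Wl i t))⁻¹ •
      ((πc * ηc * Wc t) • xc t +
        ∑ i ∈ Finset.range (N + 1),
          ((πs i * η i * Ws i t) • xs i t + (πl i * η i * Wl i t) • xl i t))) :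
    (∑ t ∈ Finset.Icc 1 T, c t (xc t)) ≥ -Real.log 3 ∧
    (∑ t ∈ Finset.Icc 1 T, c t (x t)) - (∑ t ∈ Finset.Icc 1 T, c t (xc t))
      ≤ 1 / 4 + Real.log 3 := by
  have hηc' : 0 < ηc ∧ ηc * (D * G) ≤ 1 / 2 :=
    hηc ▸ convex_rate_pos_and_mul_le_half hG hD hT
  have hη' : ∀ i, 0 < η i ∧ η i * (D * G) ≤ 1 / 2 :=
    fun i => hη i ▸ grid_rate_pos_and_mul_le_half hG hD i
  set p := malerCases πc πs πl
  have hp : ∀ k ∈ malerExperts N, 0 < p k := by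
    have : 0 < C := by rw [hC]; positivity
    refine forall_mem_malerExperts.2 ⟨?_, fun i _ => ⟨?_, ?_⟩⟩ <;>
      simp only [p, malerCases, hπc, hπs, hπl] <;> positivity
  set W := malerCases Wc Ws Wl
  set F := malerCases (fun τ => c τ (xc τ)) (fun i τ => s i τ (xs i τ))
    fun i τ => l i τ (xl i τ)
  have hW : ∀ k ∈ malerExperts N, ∀ t, W k t = exp (-∑ τ ∈ Icc 1 (t - 1), F k τ) :=
    forall_mem_malerExperts.2 ⟨hWc, fun i _ => ⟨hWs i, hWl i⟩⟩
  have hpot : ∑ k ∈ malerExperts N, p k * W k (T + 1) ≤ 1 := by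
    rw [← sum_malerExperts_prior hC hπc hπs hπl]
    refine sum_prior_mul_weight_le_sum_prior_of_centerMass (η := malerCases ηc η η)
      hconv hdiam ⟨none, none_mem_malerExperts N⟩ hp
      (forall_mem_malerExperts.2 ⟨hηc'.1, fun i _ => ⟨(hη' i).1, (hη' i).1⟩⟩) hW
      (forall_mem_malerExperts.2 ⟨hxc, fun i hi => ⟨hxs i hi, hxl i hi⟩⟩) hg
      (fun t ht => (hx t ht).trans (centerMass_malerExperts ..).symm)
      fun t ht => forall_mem_malerExperts.2
        ⟨fun hr => ?_, fun i _ => ⟨fun hr => ?_, fun hr => ?_⟩⟩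
    · dsimp only [F, malerCases] at hr ⊢
      rw [hc, show (ηc * G * D) ^ 2 = ηc ^ 2 * (D * G) ^ 2 by ring]
      exact exp_neg_le_one_add_of_abs_le hηc'.1.le hr hηc'.2
        (sq_le_sq' (abs_le.1 hr).1 (abs_le.1 hr).2)
    · dsimp only [F, malerCases] at hr ⊢
      rw [hs, mul_assoc]
      exact exp_neg_le_one_add_of_abs_le (hη' i).1.le hr (hη' i).2
        (sq_inner_le_sq_mul_sq_norm (hg t ht))
    · dsimp only [F, malerCases] at hr ⊢
      rw [hl]
      exact exp_neg_le_one_add_of_abs_le (hη' i).1.le hr (hη' i).2 le_rfl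
  have hcT : 1 / 3 * exp (-∑ t ∈ Icc 1 T, c t (xc t)) ≤ 1 :=
    calc 1 / 3 * exp (-∑ t ∈ Icc 1 T, c t (xc t)) = p none * W none (T + 1) := by
          simp only [p, W, malerCases, hπc, hWc, add_tsub_cancel_right]
      _ ≤ ∑ k ∈ malerExperts N, p k * W k (T + 1) :=
          single_le_sum (f := fun k => p k * W k (T + 1))
            (fun k hk => (mul_pos (hp k hk) (by rw [hW k hk]; positivity)).le)
            (none_mem_malerExperts N)
      _ ≤ 1 := hpot
  have hcx : ∑ t ∈ Icc 1 T, c t (x t) = 1 / 4 := by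
    simp only [hc, sub_self, inner_zero_left, mul_zero, zero_add, sum_const, Nat.card_Icc,
      add_tsub_cancel_right, nsmul_eq_mul, hηc]
    exact natCast_mul_sq_convex_rate_mul hG hD hT
  have hlog : -∑ t ∈ Icc 1 T, c t (xc t) ≤ log 3 :=
    (le_log_iff_exp_le (by norm_num)).2 (by linarith)
  constructor <;> linarith

theorem maler_meta_regret_convex
    (d T : ℕ) (hd : 1 ≤ d) (hT : 1 ≤ T)
    (G D : ℝ) (hG : 0 < G) (hD : 0 < D)
    (N : ℕ) (hN : N = ⌈Real.logb 2 T / 2⌉₊)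
    (η : ℕ → ℝ) (hη : ∀ i, η i = (2 : ℝ)^(-(i : ℤ)) / (5 * D * G))
    (ηc : ℝ) (hηc : ηc = 1 / (2 * G * D * Real.sqrt T))
    (C : ℝ) (hC : C = 1 + 1 / (N + 1))
    (πc : ℝ) (hπc : πc = 1 / 3)
    (πs πl : ℕ → ℝ)
    (hπs : ∀ i, πs i = C / (3 * (i + 1) * (i + 2)))
    (hπl : ∀ i, πl i = C / (3 * (i + 1) * (i + 2)))
    (𝒟 : Set (EuclideanSpace ℝ (Fin d))) (hconv : Convex ℝ 𝒟)
    (hdiam : ∀ a ∈ 𝒟, ∀ b ∈ 𝒟, ‖a - b‖ ≤ D)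
    (xc : ℕ → EuclideanSpace ℝ (Fin d))
    (xs xl : ℕ → ℕ → EuclideanSpace ℝ (Fin d))
    (g : ℕ → EuclideanSpace ℝ (Fin d))
    (hxc : ∀ t ∈ Finset.Icc 1 T, xc t ∈ 𝒟)
    (hxs : ∀ i ≤ N, ∀ t ∈ Finset.Icc 1 T, xs i t ∈ 𝒟)
    (hxl : ∀ i ≤ N, ∀ t ∈ Finset.Icc 1 T, xl i t ∈ 𝒟)
    (hg : ∀ t ∈ Finset.Icc 1 T, ‖g t‖ ≤ G)
    (x : ℕ → EuclideanSpace ℝ (Fin d))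
    (c : ℕ → EuclideanSpace ℝ (Fin d) → ℝ)
    (hc : ∀ t y, c t y = -ηc * (inner ℝ (x t - y) (g t) : ℝ) + (ηc * G * D)^2)
    (s l : ℕ → ℕ → EuclideanSpace ℝ (Fin d) → ℝ)
    (hs : ∀ i t y, s i t y =
      -(η i) * (inner ℝ (x t - y) (g t) : ℝ) + (η i)^2 * G^2 * ‖x t - y‖^2)
    (hl : ∀ i t y, l i t y =
      -(η i) * (inner ℝ (x t - y) (g t) : ℝ) + (η i)^2 * (inner ℝ (x t - y) (g t) : ℝ)^2)
    (Wc : ℕ → ℝ)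
    (hWc : ∀ t, Wc t = Real.exp (-(∑ τ ∈ Finset.Icc 1 (t - 1), c τ (xc τ))))
    (Ws Wl : ℕ → ℕ → ℝ)
    (hWs : ∀ i t, Ws i t = Real.exp (-(∑ τ ∈ Finset.Icc 1 (t - 1), s i τ (xs i τ))))
    (hWl : ∀ i t, Wl i t = Real.exp (-(∑ τ ∈ Finset.Icc 1 (t - 1), l i τ (xl i τ))))
    (hx : ∀ t ∈ Finset.Icc 1 T, x t =
      (πc * ηc * Wc t +
        ∑ i ∈ Finset.range (N + 1), η i * (πs i * Ws i t + πl i * Wl i t))⁻¹ •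
      ((πc * ηc * Wc t) • xc t +
        ∑ i ∈ Finset.range (N + 1),
          ((πs i * η i * Ws i t) • xs i t + (πl i * η i * Wl i t) • xl i t))) :
    (∑ t ∈ Finset.Icc 1 T, c t (xc t)) ≥ -Real.log 3 ∧
    (∑ t ∈ Finset.Icc 1 T, c t (x t)) - (∑ t ∈ Finset.Icc 1 T, c t (xc t))
      ≤ 1 / 4 + Real.log 3 :=
  maler_meta_regret_convex_general d T hT G D hG hD N η hη ηc hηc C hC πc hπc πs πl hπs hπl 𝒟 hconv
    hdiam xc xs xl g hxc hxs hxl hg x c hc s l hs hl Wc hWc Ws Wl hWs hWl hx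
end

section
/- Let d ≥ 1, let T ≥ 2 be an integer, let G, D > 0, let 𝒟 ⊆ ℝ^d be a convex set of diameter at most D, let f_1,…,f_T : ℝ^d → ℝ be convex differentiable functions, let x_t, x* ∈ 𝒟, set g_t = ∇f_t(x_t) with ‖g_t‖ ≤ G, and set B = 2 ln(√3((log₂ T)/2 + 3)) + 10 d ln T and V = Σ_{t=1}^T ⟨g_t, x_t − x*⟩². Let η_i = 2^{−i}/(5DG) for i = 0,…,⌈(log₂ T)/2⌉, and for each i let y_t^i ∈ 𝒟 (t = 1,…,T). If for every i both Σ_{t=1}^T ℓ_t^{η_i}(x_t) − Σ_{t=1}^T ℓ_t^{η_i}(y_t^i) ≤ 2 ln(√3((log₂ T)/2 + 3)) and Σ_{t=1}^T ℓ_t^{η_i}(y_t^i) − Σ_{t=1}^T ℓ_t^{η_i}(x*) ≤ 10 d ln T hold, then Σ_{t=1}^T f_t(x_t) − Σ_{t=1}^T f_t(x*) ≤ 3√(V·B) + 10GD·B. -/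
/-!
Convexity bounds the regret by the linearised regret `R = ∑ ⟪g_t, x_t - x*⟫`. Adding the meta
and expert bounds, and noting that the surrogate loss vanishes at `x_t`, gives
`η R - η² V ≤ B`, i.e. `R ≤ B / η + η V`, for every rate `η` of the geometric grid. The grid
reaches down to `1 / (5DG√T)` and `V ≤ G²D²T`, so either the optimal rate `√(B / V)` exceeds
`1 / (5DG)`, and the largest rate gives `R ≤ 5DG·B + √(VB)`, or some grid rate lies within a
factor two of it, and `R ≤ 3√(VB)`.
-/

open Real

theorem ConvexOn.sub_le_inner_of_hasGradientAt {E : Type*} [NormedAddCommGroup E]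
    [InnerProductSpace ℝ E] [CompleteSpace E] {f : E → ℝ} {g p : E}
    (hf : ConvexOn ℝ Set.univ f) (hg : HasGradientAt f g p) (q : E) :
    f p - f q ≤ inner ℝ g (p - q) := by
  set φ := f ∘ AffineMap.lineMap (k := ℝ) p q
  have hφ : ConvexOn ℝ Set.univ φ := by
    simpa using hf.comp_affineMap (AffineMap.lineMap p q)
  have hφ' : HasDerivAt φ (inner ℝ g (q - p)) 0 := by
    simpa using hg.hasFDerivAt.comp_hasDerivAt_of_eq (0 : ℝ) AffineMap.hasDerivAt_lineMap
      (by simp)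
  have := hφ.le_slope_of_hasDerivAt (Set.mem_univ 0) (Set.mem_univ 1) one_pos hφ'
  simp only [φ, slope_def_field, Function.comp_apply, AffineMap.lineMap_apply_one,
    AffineMap.lineMap_apply_zero, sub_zero, div_one] at this
  rw [← neg_sub q p, inner_neg_right]
  linarith

theorem exists_pow_two_mem_Icc_of_sq_le {a T : ℝ} (ha : 1 ≤ a) (haT : a ^ 2 ≤ T) :
    ∃ i ≤ ⌈logb 2 T / 2⌉₊, a ≤ 2 ^ i ∧ (2 : ℝ) ^ i ≤ 2 * a := by
  have ha0 : 0 < a := by linarith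
  have hlog : 0 ≤ logb 2 a := logb_nonneg one_lt_two ha
  refine ⟨⌈logb 2 a⌉₊, Nat.ceil_mono ?_, ?_, ?_⟩
  · have := logb_le_logb_of_le (b := 2) one_lt_two (by positivity) haT
    rw [logb_pow] at this
    push_cast at this
    linarith
  · calc a = 2 ^ logb 2 a := (rpow_logb two_pos one_lt_two.ne' ha0).symm
      _ ≤ 2 ^ (⌈logb 2 a⌉₊ : ℝ) := rpow_le_rpow_of_exponent_le one_le_two (Nat.le_ceil _)
      _ = 2 ^ ⌈logb 2 a⌉₊ := rpow_natCast 2 _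
  · calc (2 : ℝ) ^ ⌈logb 2 a⌉₊ = 2 ^ (⌈logb 2 a⌉₊ : ℝ) := (rpow_natCast 2 _).symm
      _ ≤ 2 ^ (logb 2 a + 1) :=
        rpow_le_rpow_of_exponent_le one_le_two (Nat.ceil_lt_add_one hlog).le
      _ = 2 * a := by
        rw [rpow_add two_pos, rpow_logb two_pos one_lt_two.ne' ha0, rpow_one, mul_comm]

theorem le_div_add_mul_of_mul_sub_sq_le {η R V B : ℝ} (hη : 0 < η)
    (h : η * R - η ^ 2 * V ≤ B) : R ≤ B / η + η * V := by
  rw [← mul_le_mul_iff_right₀ hη, mul_add, mul_div_cancel₀ _ hη.ne']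
  linarith

/-- If the optimal rate `√(B / V)` is below the largest rate `1 / c`, some rate of the grid is
within a factor two of it; otherwise `1 / c` itself does. -/
theorem le_three_mul_sqrt_add_of_forall_grid {c T B V R : ℝ} (hc : 0 < c) (hB : 0 < B)
    (hV : 0 ≤ V) (hVT : V ≤ c ^ 2 * T * B)
    (h : ∀ i ≤ ⌈logb 2 T / 2⌉₊, (c * 2 ^ i)⁻¹ * R - (c * 2 ^ i)⁻¹ ^ 2 * V ≤ B) :
    R ≤ 3 * √(V * B) + 2 * c * B := by
  rcases le_or_gt V (c ^ 2 * B) with hsmall | hlarge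
  · have hR := le_div_add_mul_of_mul_sub_sq_le (by positivity) (h 0 (Nat.zero_le _))
    simp only [pow_zero, mul_one, div_inv_eq_mul] at hR
    have hVc : c⁻¹ * V ≤ √(V * B) := by
      rw [le_sqrt (by positivity) (by positivity), mul_pow, inv_pow,
        inv_mul_le_iff₀ (by positivity)]
      nlinarith
    linarith [mul_pos hc hB, sqrt_nonneg (V * B)]
  · set u := √V
    set w := √B
    have hu : u ^ 2 = V := sq_sqrt hV
    have hw : w ^ 2 = B := sq_sqrt hB.le
    have hw0 : 0 < w := sqrt_pos.mpr hB
    have hcwu : c * w < u := by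
      rw [← sqrt_sq (by positivity : 0 ≤ c * w), mul_pow, hw]
      exact sqrt_lt_sqrt (by positivity) hlarge
    obtain ⟨i, hi, hlo, hhi⟩ := exists_pow_two_mem_Icc_of_sq_le (a := u / (c * w)) (T := T)
      ((one_le_div (by positivity)).mpr hcwu.le)
      (by rw [div_pow, div_le_iff₀ (by positivity), mul_pow, hu, hw]; linarith)
    set k := c * 2 ^ i
    have hk0 : 0 < k := by positivity
    have hlo' : u ≤ k * w := by
      rw [div_le_iff₀ (by positivity)] at hlo; linarith
    have hhi' : k * w ≤ 2 * u := by
      rw [← mul_div_assoc, le_div_iff₀ (by positivity)] at hhi; linarith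
    have hR := le_div_add_mul_of_mul_sub_sq_le (inv_pos.mpr hk0) (h i hi)
    rw [div_inv_eq_mul] at hR
    have hsqrt : √(V * B) = u * w := sqrt_mul hV B
    have h1 : B * k ≤ 2 * (u * w) := by rw [← hw]; nlinarith
    have h2 : k⁻¹ * V ≤ u * w := by
      rw [inv_mul_le_iff₀ hk0, ← hu]; nlinarith
    linarith [mul_pos hc hB]

theorem sum_inner_sq_le_card_mul {ι E : Type*} [NormedAddCommGroup E] [InnerProductSpace ℝ E]
    {s : Finset ι} {g v : ι → E} {G D : ℝ} (hg : ∀ t ∈ s, ‖g t‖ ≤ G)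
    (hv : ∀ t ∈ s, ‖v t‖ ≤ D) :
    ∑ t ∈ s, inner ℝ (g t) (v t) ^ 2 ≤ s.card * (G * D) ^ 2 := by
  rw [← nsmul_eq_mul]
  refine Finset.sum_le_card_nsmul _ _ _ fun t ht => ?_
  rw [← sq_abs]
  gcongr
  exact (abs_real_inner_le_norm _ _).trans
    (mul_le_mul (hg t ht) (hv t ht) (norm_nonneg _) ((norm_nonneg _).trans (hg t ht)))

theorem one_le_log_sqrt_three_mul_add (d T : ℕ) :
    1 ≤ 2 * log (√3 * (logb 2 T / 2 + 3)) + 10 * d * log T := by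
  have hlogb : 0 ≤ logb 2 T := div_nonneg (log_natCast_nonneg T) (log_nonneg one_le_two)
  have h3 : 3 ≤ √3 * (logb 2 T / 2 + 3) := by
    nlinarith [one_le_sqrt.mpr (by norm_num : (1 : ℝ) ≤ 3)]
  have hlog3 : log 2 ≤ log (√3 * (logb 2 T / 2 + 3)) := log_le_log two_pos (by linarith)
  have hdT : 0 ≤ 10 * d * log T := by positivity
  linarith [log_two_gt_d9]

theorem maler_expConcave_data_dependent_regret_general
    (d T : ℕ)
    (G D : ℝ) (hG : 0 < G) (hD : 0 < D)
    (𝒟 : Set (EuclideanSpace ℝ (Fin d)))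
    (hdiam : ∀ a ∈ 𝒟, ∀ b ∈ 𝒟, ‖a - b‖ ≤ D)
    (f : ℕ → EuclideanSpace ℝ (Fin d) → ℝ)
    (hfconv : ∀ t ∈ Finset.Icc 1 T, ConvexOn ℝ Set.univ (f t))
    (x : ℕ → EuclideanSpace ℝ (Fin d)) (xstar : EuclideanSpace ℝ (Fin d))
    (hx : ∀ t ∈ Finset.Icc 1 T, x t ∈ 𝒟) (hxstar : xstar ∈ 𝒟)
    (g : ℕ → EuclideanSpace ℝ (Fin d))
    (hgrad : ∀ t ∈ Finset.Icc 1 T, HasGradientAt (f t) (g t) (x t))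
    (hg : ∀ t ∈ Finset.Icc 1 T, ‖g t‖ ≤ G)
    (B V : ℝ)
    (hB : B = 2 * Real.log (Real.sqrt 3 * (Real.logb 2 T / 2 + 3)) + 10 * d * Real.log T)
    (hV : V = ∑ t ∈ Finset.Icc 1 T, (inner ℝ (g t) (x t - xstar) : ℝ)^2)
    (η : ℕ → ℝ) (hη : ∀ i, η i = (2 : ℝ)^(-(i : ℤ)) / (5 * D * G))
    (y : ℕ → ℕ → EuclideanSpace ℝ (Fin d))
    (l : ℕ → ℕ → EuclideanSpace ℝ (Fin d) → ℝ)
    (hl : ∀ i t z, l i t z =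
      -(η i) * (inner ℝ (x t - z) (g t) : ℝ) + (η i)^2 * (inner ℝ (x t - z) (g t) : ℝ)^2)
    (hmeta : ∀ i ≤ ⌈Real.logb 2 T / 2⌉₊,
      (∑ t ∈ Finset.Icc 1 T, l i t (x t)) - (∑ t ∈ Finset.Icc 1 T, l i t (y i t))
        ≤ 2 * Real.log (Real.sqrt 3 * (Real.logb 2 T / 2 + 3)))
    (hexpert : ∀ i ≤ ⌈Real.logb 2 T / 2⌉₊,
      (∑ t ∈ Finset.Icc 1 T, l i t (y i t)) - (∑ t ∈ Finset.Icc 1 T, l i t xstar)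
        ≤ 10 * d * Real.log T) :
    (∑ t ∈ Finset.Icc 1 T, f t (x t)) - (∑ t ∈ Finset.Icc 1 T, f t xstar)
      ≤ 3 * Real.sqrt (V * B) + 10 * G * D * B := by
  set R := ∑ t ∈ Finset.Icc 1 T, inner ℝ (g t) (x t - xstar)
  have hregret : (∑ t ∈ Finset.Icc 1 T, f t (x t)) - (∑ t ∈ Finset.Icc 1 T, f t xstar) ≤ R := by
    rw [← Finset.sum_sub_distrib]
    exact Finset.sum_le_sum fun t ht =>
      (hfconv t ht).sub_le_inner_of_hasGradientAt (hgrad t ht) xstar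
  have hB1 : 1 ≤ B := hB ▸ one_le_log_sqrt_three_mul_add d T
  have hVbound : V ≤ (G * D) ^ 2 * T := by
    have := sum_inner_sq_le_card_mul hg fun t ht => hdiam _ (hx t ht) _ hxstar
    rwa [Nat.card_Icc, add_tsub_cancel_right, mul_comm, ← hV] at this
  have hgrid : ∀ i ≤ ⌈logb 2 T / 2⌉₊,
      (5 * D * G * 2 ^ i)⁻¹ * R - (5 * D * G * 2 ^ i)⁻¹ ^ 2 * V ≤ B := by
    intro i hi
    have hlearner : ∑ t ∈ Finset.Icc 1 T, l i t (x t) = 0 := by simp [hl]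
    have hcomparator : ∑ t ∈ Finset.Icc 1 T, l i t xstar = -η i * R + η i ^ 2 * V := by
      simp only [hl, hV, R, real_inner_comm (g _), Finset.sum_add_distrib, ← Finset.mul_sum]
    have hηi : η i = (5 * D * G * 2 ^ i)⁻¹ := by
      rw [hη, zpow_neg, zpow_natCast, div_eq_inv_mul, ← mul_inv, mul_comm]
    rw [← hηi, hB]
    linarith [hmeta i hi, hexpert i hi]
  have hVgrid : V ≤ (5 * D * G) ^ 2 * T * B := calc
    V ≤ (G * D) ^ 2 * T * 1 := by rwa [mul_one]
    _ ≤ (5 * D * G) ^ 2 * T * B := by gcongr ?_ ^ 2 * _ * ?_; linarith [mul_pos hG hD]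
  have hR := le_three_mul_sqrt_add_of_forall_grid (by positivity) (by positivity)
    (hV ▸ Finset.sum_nonneg fun t _ => sq_nonneg _) hVgrid hgrid
  linarith

theorem maler_expConcave_data_dependent_regret
    (d T : ℕ) (hd : 1 ≤ d) (hT : 2 ≤ T)
    (G D : ℝ) (hG : 0 < G) (hD : 0 < D)
    (𝒟 : Set (EuclideanSpace ℝ (Fin d))) (hconv : Convex ℝ 𝒟)
    (hdiam : ∀ a ∈ 𝒟, ∀ b ∈ 𝒟, ‖a - b‖ ≤ D)
    (f : ℕ → EuclideanSpace ℝ (Fin d) → ℝ)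
    (hfconv : ∀ t ∈ Finset.Icc 1 T, ConvexOn ℝ Set.univ (f t))
    (x : ℕ → EuclideanSpace ℝ (Fin d)) (xstar : EuclideanSpace ℝ (Fin d))
    (hx : ∀ t ∈ Finset.Icc 1 T, x t ∈ 𝒟) (hxstar : xstar ∈ 𝒟)
    (g : ℕ → EuclideanSpace ℝ (Fin d))
    (hgrad : ∀ t ∈ Finset.Icc 1 T, HasGradientAt (f t) (g t) (x t))
    (hg : ∀ t ∈ Finset.Icc 1 T, ‖g t‖ ≤ G)
    (B V : ℝ)
    (hB : B = 2 * Real.log (Real.sqrt 3 * (Real.logb 2 T / 2 + 3)) + 10 * d * Real.log T)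
    (hV : V = ∑ t ∈ Finset.Icc 1 T, (inner ℝ (g t) (x t - xstar) : ℝ)^2)
    (η : ℕ → ℝ) (hη : ∀ i, η i = (2 : ℝ)^(-(i : ℤ)) / (5 * D * G))
    (y : ℕ → ℕ → EuclideanSpace ℝ (Fin d))
    (hy : ∀ i ≤ ⌈Real.logb 2 T / 2⌉₊, ∀ t ∈ Finset.Icc 1 T, y i t ∈ 𝒟)
    (l : ℕ → ℕ → EuclideanSpace ℝ (Fin d) → ℝ)
    (hl : ∀ i t z, l i t z =
      -(η i) * (inner ℝ (x t - z) (g t) : ℝ) + (η i)^2 * (inner ℝ (x t - z) (g t) : ℝ)^2)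
    (hmeta : ∀ i ≤ ⌈Real.logb 2 T / 2⌉₊,
      (∑ t ∈ Finset.Icc 1 T, l i t (x t)) - (∑ t ∈ Finset.Icc 1 T, l i t (y i t))
        ≤ 2 * Real.log (Real.sqrt 3 * (Real.logb 2 T / 2 + 3)))
    (hexpert : ∀ i ≤ ⌈Real.logb 2 T / 2⌉₊,
      (∑ t ∈ Finset.Icc 1 T, l i t (y i t)) - (∑ t ∈ Finset.Icc 1 T, l i t xstar)
        ≤ 10 * d * Real.log T) :
    (∑ t ∈ Finset.Icc 1 T, f t (x t)) - (∑ t ∈ Finset.Icc 1 T, f t xstar)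
      ≤ 3 * Real.sqrt (V * B) + 10 * G * D * B :=
  maler_expConcave_data_dependent_regret_general d T G D hG hD 𝒟 hdiam f hfconv x xstar hx hxstar g
    hgrad hg B V hB hV η hη y l hl hmeta hexpert
end
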